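/- For the third-order evolution equation Δ = u_t − 3·u_xx·u_xxx/u_x + (u_xx)³/(u_x)² − f(t), the quasi-Lagrangian identity holds: the Euler operator applied to L = −(1/2)·u_x·Δ satisfies E_u(L) = D_x(Δ), as an identity in jet coordinates on the region u_x ≠ 0. -/

import Mathlib

/-- Partial derivative with respect to the jet coordinate u_{(i,j)} = ∂_t^i ∂_x^j u. -/
noncomputable def pj2 (F : ℝ → ℝ → (ℕ × ℕ → ℝ) → ℝ) (p : ℕ × ℕ) :
    ℝ → ℝ → (ℕ × ℕ → ℝ) → ℝ :=
  fun t x U => deriv (fun s => F t x (Function.update U p s)) (U p)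

/-- Total t-derivative on jet space. -/
noncomputable def DT (F : ℝ → ℝ → (ℕ × ℕ → ℝ) → ℝ) : ℝ → ℝ → (ℕ × ℕ → ℝ) → ℝ :=
  fun t x U => deriv (fun s => F s x U) t
    + ∑' p : ℕ × ℕ, U (p.1 + 1, p.2) * pj2 F p t x U

/-- Total x-derivative on jet space. -/
noncomputable def DX (F : ℝ → ℝ → (ℕ × ℕ → ℝ) → ℝ) : ℝ → ℝ → (ℕ × ℕ → ℝ) → ℝ :=
  fun t x U => deriv (fun s => F t s U) x
    + ∑' p : ℕ × ℕ, U (p.1, p.2 + 1) * pj2 F p t x U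

/-- Full Euler operator E_u(L) = Σ_{(i,j)} (−1)^{i+j} D_t^i D_x^j ∂L/∂u_{(i,j)}. -/
noncomputable def EulerU (L : ℝ → ℝ → (ℕ × ℕ → ℝ) → ℝ) : ℝ → ℝ → (ℕ × ℕ → ℝ) → ℝ :=
  fun t x U => ∑' p : ℕ × ℕ,
    (-1 : ℝ) ^ (p.1 + p.2) * (DT^[p.1] (DX^[p.2] (pj2 L p))) t x U

/-! ### Auxiliary machinery -/

lemma pj2_eval (F : ℝ → ℝ → (ℕ × ℕ → ℝ) → ℝ) (p : ℕ × ℕ) (t x : ℝ) (U : ℕ × ℕ → ℝ)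
    (g : ℝ → ℝ) (h : ∀ᶠ s in nhds (U p), F t x (Function.update U p s) = g s) :
    pj2 F p t x U = deriv g (U p) :=
  Filter.EventuallyEq.deriv_eq h

lemma pj2_zero_of (G : ℝ → ℝ → (ℕ × ℕ → ℝ) → ℝ) (p : ℕ × ℕ) (t x : ℝ) (U : ℕ × ℕ → ℝ)
    (h : ∀ s, G t x (Function.update U p s) = G t x U) : pj2 G p t x U = 0 := by
  unfold pj2
  rw [funext h]
  exact deriv_const _ _

lemma deriv_poly3 (A B C D x : ℝ) :
    deriv (fun s => A + B*s + C*s^2 + D*s^3) x = B + 2*C*x + 3*D*x^2 := by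
  have h : HasDerivAt (fun s : ℝ => A + B*s + C*s^2 + D*s^3)
      (B + 2*C*x + 3*D*x^2) x := by
    have := (((hasDerivAt_const x A).add ((hasDerivAt_id x).const_mul B)).add
      ((hasDerivAt_pow 2 x).const_mul C)).add ((hasDerivAt_pow 3 x).const_mul D)
    refine this.congr_deriv ?_
    push_cast; ring
  exact h.deriv

lemma deriv_rat (A B C D E F x : ℝ) (hx : x ≠ 0) :
    deriv (fun s => A + B*s + C*s^2 + D*s^3 + E/s + F/s^2) x
      = B + 2*C*x + 3*D*x^2 - E/x^2 - 2*F/x^3 := by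
  have h : HasDerivAt (fun s : ℝ => A + B*s + C*s^2 + D*s^3 + E/s + F/s^2)
      (B + 2*C*x + 3*D*x^2 - E/x^2 - 2*F/x^3) x := by
    have := ((((((hasDerivAt_const x A).add ((hasDerivAt_id x).const_mul B)).add
      ((hasDerivAt_pow 2 x).const_mul C)).add ((hasDerivAt_pow 3 x).const_mul D)).add
      ((hasDerivAt_const x E).div (hasDerivAt_id x) hx)).add
      ((hasDerivAt_const x F).div (hasDerivAt_pow 2 x) (pow_ne_zero 2 hx)))
    refine this.congr_deriv ?_
    push_cast; simp only [id]; field_simp; ring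
  exact h.deriv

lemma pj2_congr {F G : ℝ → ℝ → (ℕ × ℕ → ℝ) → ℝ}
    (h : ∀ t x U, U (0,1) ≠ 0 → F t x U = G t x U)
    (t x : ℝ) (U : ℕ × ℕ → ℝ) (h1 : U (0,1) ≠ 0) (p : ℕ × ℕ) :
    pj2 F p t x U = pj2 G p t x U := by
  unfold pj2
  apply Filter.EventuallyEq.deriv_eq
  by_cases hp : p = (0,1)
  · subst hp
    filter_upwards [eventually_ne_nhds h1] with s hs
    exact h t x _ (by simpa using hs)
  · filter_upwards with s
    exact h t x _ (by rwa [Function.update_of_ne (Ne.symm hp)])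

lemma DX_congr {F G : ℝ → ℝ → (ℕ × ℕ → ℝ) → ℝ}
    (h : ∀ t x U, U (0,1) ≠ 0 → F t x U = G t x U)
    (t x : ℝ) (U : ℕ × ℕ → ℝ) (h1 : U (0,1) ≠ 0) :
    DX F t x U = DX G t x U := by
  unfold DX
  congr 1
  · congr 1; funext s; exact h t s U h1
  · exact tsum_congr fun p => by rw [pj2_congr h t x U h1 p]

lemma DT_congr {F G : ℝ → ℝ → (ℕ × ℕ → ℝ) → ℝ}
    (h : ∀ t x U, U (0,1) ≠ 0 → F t x U = G t x U)
    (t x : ℝ) (U : ℕ × ℕ → ℝ) (h1 : U (0,1) ≠ 0) :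
    DT F t x U = DT G t x U := by
  unfold DT
  congr 1
  · congr 1; funext s; exact h s x U h1
  · exact tsum_congr fun p => by rw [pj2_congr h t x U h1 p]

lemma DX_zero : DX (fun _ _ _ => (0:ℝ)) = fun _ _ _ => 0 := by
  funext t x U; simp [DX, pj2]

lemma DT_zero : DT (fun _ _ _ => (0:ℝ)) = fun _ _ _ => 0 := by
  funext t x U; simp [DT, pj2]

lemma DX_iter_zero (n : ℕ) : DX^[n] (fun _ _ _ => (0:ℝ)) = fun _ _ _ => 0 := by
  induction n with
  | zero => rfl
  | succ n ih => rw [Function.iterate_succ_apply, DX_zero, ih]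

lemma DT_iter_zero (n : ℕ) : DT^[n] (fun _ _ _ => (0:ℝ)) = fun _ _ _ => 0 := by
  induction n with
  | zero => rfl
  | succ n ih => rw [Function.iterate_succ_apply, DT_zero, ih]

/-! ### pj2 of the Lagrangian -/

section stages
variable (f : ℝ → ℝ)

lemma P10 (t x : ℝ) (U : ℕ × ℕ → ℝ) :
    pj2 (fun t _x U => -(1/2) * U (0,1) *
        (U (1,0) - 3 * U (0,2) * U (0,3) / U (0,1) + (U (0,2))^3 / (U (0,1))^2 - f t))
      (1,0) t x U = -(1/2) * U (0,1) := by
  rw [pj2_eval _ (1,0) t x U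
      (fun s => -(1/2) * U (0,1) * (-(3 * U (0,2) * U (0,3)) / U (0,1)
          + (U (0,2))^3 / (U (0,1))^2 - f t) + (-(1/2) * U (0,1)) * s + 0*s^2 + 0*s^3)
      (Filter.Eventually.of_forall fun s => by simp [Function.update_apply]; ring)]
  rw [deriv_poly3]; ring

lemma P01 (t x : ℝ) (U : ℕ × ℕ → ℝ) (h1 : U (0,1) ≠ 0) :
    pj2 (fun t _x U => -(1/2) * U (0,1) *
        (U (1,0) - 3 * U (0,2) * U (0,3) / U (0,1) + (U (0,2))^3 / (U (0,1))^2 - f t))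
      (0,1) t x U
      = -(1/2) * U (1,0) + 1/2 * f t + 1/2 * (U (0,2))^3 / (U (0,1))^2 := by
  rw [pj2_eval _ (0,1) t x U
      (fun s => 3/2 * U (0,2) * U (0,3) + (-(1/2) * U (1,0) + 1/2 * f t) * s
          + 0*s^2 + 0*s^3 + (-(1/2) * (U (0,2))^3)/s + 0/s^2)
      ((eventually_ne_nhds h1).mono fun s hs => by
        simp [Function.update_apply]; field_simp; ring)]
  rw [deriv_rat _ _ _ _ _ _ _ h1]; field_simp; ring

lemma P02 (t x : ℝ) (U : ℕ × ℕ → ℝ) (h1 : U (0,1) ≠ 0) :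
    pj2 (fun t _x U => -(1/2) * U (0,1) *
        (U (1,0) - 3 * U (0,2) * U (0,3) / U (0,1) + (U (0,2))^3 / (U (0,1))^2 - f t))
      (0,2) t x U = 3/2 * U (0,3) - 3/2 * (U (0,2))^2 / U (0,1) := by
  rw [pj2_eval _ (0,2) t x U
      (fun s => -(1/2) * U (0,1) * (U (1,0) - f t) + (3/2 * U (0,3)) * s + 0*s^2
          + (-(1/2) / U (0,1)) * s^3)
      (Filter.Eventually.of_forall fun s => by
        simp [Function.update_apply]; field_simp; ring)]
  rw [deriv_poly3]; field_simp; ring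

lemma P03 (t x : ℝ) (U : ℕ × ℕ → ℝ) (h1 : U (0,1) ≠ 0) :
    pj2 (fun t _x U => -(1/2) * U (0,1) *
        (U (1,0) - 3 * U (0,2) * U (0,3) / U (0,1) + (U (0,2))^3 / (U (0,1))^2 - f t))
      (0,3) t x U = 3/2 * U (0,2) := by
  rw [pj2_eval _ (0,3) t x U
      (fun s => -(1/2) * U (0,1) * (U (1,0) + (U (0,2))^3 / (U (0,1))^2 - f t)
          + (3/2 * U (0,2)) * s + 0*s^2 + 0*s^3)
      (Filter.Eventually.of_forall fun s => by
        simp [Function.update_apply]; field_simp; ring)]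
  rw [deriv_poly3]; ring

/-! ### total derivatives of the closed forms -/

lemma DT_G10 (t x : ℝ) (U : ℕ × ℕ → ℝ) :
    DT (fun _t _x V => -(1/2) * V (0,1)) t x U = -(1/2) * U (1,1) := by
  unfold DT
  rw [tsum_eq_sum (s := ({(0,1)} : Finset (ℕ×ℕ))) ?side]
  case side =>
    intro p hp
    rw [Finset.mem_singleton] at hp
    rw [pj2_zero_of _ p t x U (fun s => by
      simp only [Function.update_of_ne (Ne.symm hp)]), mul_zero]
  rw [Finset.sum_singleton]
  rw [pj2_eval _ (0,1) t x U (fun s => 0 + (-(1/2)) * s + 0*s^2 + 0*s^3)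
      (Filter.Eventually.of_forall fun s => by simp [Function.update_apply]; try ring)]
  rw [deriv_poly3]
  rw [show deriv (fun s : ℝ => -(1/2) * U (0,1)) t = 0 from deriv_const _ _]
  ring

lemma DX_single (c : ℝ) (k : ℕ) (t x : ℝ) (U : ℕ × ℕ → ℝ) :
    DX (fun _t _x V => c * V (0,k)) t x U = c * U (0,k+1) := by
  unfold DX
  rw [tsum_eq_sum (s := ({(0,k)} : Finset (ℕ×ℕ))) ?side]
  case side =>
    intro p hp
    rw [Finset.mem_singleton] at hp
    rw [pj2_zero_of _ p t x U (fun s => by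
      simp only [Function.update_of_ne (Ne.symm hp)]), mul_zero]
  rw [Finset.sum_singleton]
  rw [pj2_eval _ (0,k) t x U (fun s => 0 + c * s + 0*s^2 + 0*s^3)
      (Filter.Eventually.of_forall fun s => by simp [Function.update_apply]; try ring)]
  rw [deriv_poly3]
  rw [show deriv (fun s : ℝ => c * U (0,k)) x = 0 from deriv_const _ _]
  ring

lemma DX_G01 (t x : ℝ) (U : ℕ × ℕ → ℝ) (h1 : U (0,1) ≠ 0) :
    DX (fun t _x V => -(1/2) * V (1,0) + 1/2 * f t + 1/2 * (V (0,2))^3 / (V (0,1))^2)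
      t x U
      = -(1/2) * U (1,1) + 3/2 * (U (0,2))^2 * U (0,3) / (U (0,1))^2
          - (U (0,2))^4 / (U (0,1))^3 := by
  unfold DX
  rw [tsum_eq_sum (s := ({(1,0),(0,2),(0,1)} : Finset (ℕ×ℕ))) ?side]
  case side =>
    intro p hp
    simp only [Finset.mem_insert, Finset.mem_singleton] at hp
    push_neg at hp
    obtain ⟨n1, n2, n3⟩ := hp
    rw [pj2_zero_of _ p t x U (fun s => by
      simp only [Function.update_of_ne (Ne.symm n1), Function.update_of_ne (Ne.symm n2),
        Function.update_of_ne (Ne.symm n3)]), mul_zero]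
  rw [Finset.sum_insert (by decide), Finset.sum_insert (by decide), Finset.sum_singleton]
  rw [pj2_eval _ (1,0) t x U
      (fun s => (1/2 * f t + 1/2 * (U (0,2))^3 / (U (0,1))^2) + (-(1/2)) * s + 0*s^2 + 0*s^3)
      (Filter.Eventually.of_forall fun s => by simp [Function.update_apply]; ring)]
  rw [pj2_eval _ (0,2) t x U
      (fun s => (-(1/2) * U (1,0) + 1/2 * f t) + 0 * s + 0*s^2
          + (1/2 / (U (0,1))^2) * s^3)
      (Filter.Eventually.of_forall fun s => by simp [Function.update_apply]; ring)]
  rw [pj2_eval _ (0,1) t x U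
      (fun s => (-(1/2) * U (1,0) + 1/2 * f t) + 0 * s + 0*s^2 + 0*s^3 + 0/s
          + (1/2 * (U (0,2))^3)/s^2)
      (Filter.Eventually.of_forall fun s => by simp [Function.update_apply]; try ring)]
  rw [deriv_poly3, deriv_poly3, deriv_rat _ _ _ _ _ _ _ h1]
  rw [show deriv (fun s : ℝ => -(1/2) * U (1,0) + 1/2 * f t
      + 1/2 * (U (0,2))^3 / (U (0,1))^2) x = 0 from deriv_const _ _]
  field_simp
  ring

lemma DX_G02 (t x : ℝ) (U : ℕ × ℕ → ℝ) (h1 : U (0,1) ≠ 0) :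
    DX (fun _t _x V => 3/2 * V (0,3) - 3/2 * (V (0,2))^2 / V (0,1)) t x U
      = 3/2 * U (0,4) - 3 * U (0,2) * U (0,3) / U (0,1)
          + 3/2 * (U (0,2))^3 / (U (0,1))^2 := by
  unfold DX
  rw [tsum_eq_sum (s := ({(0,3),(0,2),(0,1)} : Finset (ℕ×ℕ))) ?side]
  case side =>
    intro p hp
    simp only [Finset.mem_insert, Finset.mem_singleton] at hp
    push_neg at hp
    obtain ⟨n1, n2, n3⟩ := hp
    rw [pj2_zero_of _ p t x U (fun s => by
      simp only [Function.update_of_ne (Ne.symm n1), Function.update_of_ne (Ne.symm n2),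
        Function.update_of_ne (Ne.symm n3)]), mul_zero]
  rw [Finset.sum_insert (by decide), Finset.sum_insert (by decide), Finset.sum_singleton]
  rw [pj2_eval _ (0,3) t x U
      (fun s => (-(3/2) * (U (0,2))^2 / U (0,1)) + (3/2) * s + 0*s^2 + 0*s^3)
      (Filter.Eventually.of_forall fun s => by simp [Function.update_apply]; ring)]
  rw [pj2_eval _ (0,2) t x U
      (fun s => 3/2 * U (0,3) + 0 * s + (-(3/2) / U (0,1)) * s^2 + 0*s^3)
      (Filter.Eventually.of_forall fun s => by simp [Function.update_apply]; ring)]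
  rw [pj2_eval _ (0,1) t x U
      (fun s => 3/2 * U (0,3) + 0 * s + 0*s^2 + 0*s^3 + (-(3/2) * (U (0,2))^2)/s + 0/s^2)
      (Filter.Eventually.of_forall fun s => by simp [Function.update_apply]; ring)]
  rw [deriv_poly3, deriv_poly3, deriv_rat _ _ _ _ _ _ _ h1]
  rw [show deriv (fun s : ℝ => 3/2 * U (0,3) - 3/2 * (U (0,2))^2 / U (0,1)) x = 0 from
    deriv_const _ _]
  field_simp
  ring

lemma DX_H02 (t x : ℝ) (U : ℕ × ℕ → ℝ) (h1 : U (0,1) ≠ 0) :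
    DX (fun _t _x V => 3/2 * V (0,4) - 3 * V (0,2) * V (0,3) / V (0,1)
          + 3/2 * (V (0,2))^3 / (V (0,1))^2) t x U
      = 3/2 * U (0,5) - 3 * (U (0,3))^2 / U (0,1) - 3 * U (0,2) * U (0,4) / U (0,1)
          + 15/2 * (U (0,2))^2 * U (0,3) / (U (0,1))^2
          - 3 * (U (0,2))^4 / (U (0,1))^3 := by
  unfold DX
  rw [tsum_eq_sum (s := ({(0,4),(0,2),(0,3),(0,1)} : Finset (ℕ×ℕ))) ?side]
  case side =>
    intro p hp
    simp only [Finset.mem_insert, Finset.mem_singleton] at hp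
    push_neg at hp
    obtain ⟨n1, n2, n3, n4⟩ := hp
    rw [pj2_zero_of _ p t x U (fun s => by
      simp only [Function.update_of_ne (Ne.symm n1), Function.update_of_ne (Ne.symm n2),
        Function.update_of_ne (Ne.symm n3), Function.update_of_ne (Ne.symm n4)]), mul_zero]
  rw [Finset.sum_insert (by decide), Finset.sum_insert (by decide),
      Finset.sum_insert (by decide), Finset.sum_singleton]
  rw [pj2_eval _ (0,4) t x U
      (fun s => (-(3) * U (0,2) * U (0,3) / U (0,1) + 3/2 * (U (0,2))^3 / (U (0,1))^2)
          + (3/2) * s + 0*s^2 + 0*s^3)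
      (Filter.Eventually.of_forall fun s => by simp [Function.update_apply]; ring)]
  rw [pj2_eval _ (0,2) t x U
      (fun s => 3/2 * U (0,4) + (-(3) * U (0,3) / U (0,1)) * s + 0*s^2
          + (3/2 / (U (0,1))^2) * s^3)
      (Filter.Eventually.of_forall fun s => by simp [Function.update_apply]; ring)]
  rw [pj2_eval _ (0,3) t x U
      (fun s => (3/2 * U (0,4) + 3/2 * (U (0,2))^3 / (U (0,1))^2)
          + (-(3) * U (0,2) / U (0,1)) * s + 0*s^2 + 0*s^3)
      (Filter.Eventually.of_forall fun s => by simp [Function.update_apply]; ring)]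
  rw [pj2_eval _ (0,1) t x U
      (fun s => 3/2 * U (0,4) + 0 * s + 0*s^2 + 0*s^3
          + (-(3) * U (0,2) * U (0,3))/s + (3/2 * (U (0,2))^3)/s^2)
      (Filter.Eventually.of_forall fun s => by simp [Function.update_apply]; ring)]
  rw [deriv_poly3, deriv_poly3, deriv_poly3, deriv_rat _ _ _ _ _ _ _ h1]
  rw [show deriv (fun s : ℝ => 3/2 * U (0,4) - 3 * U (0,2) * U (0,3) / U (0,1)
      + 3/2 * (U (0,2))^3 / (U (0,1))^2) x = 0 from deriv_const _ _]
  field_simp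
  ring

lemma DX_Delta (t x : ℝ) (U : ℕ × ℕ → ℝ) (h1 : U (0,1) ≠ 0) :
    DX (fun t _x U => U (1, 0) - 3 * U (0, 2) * U (0, 3) / U (0, 1)
          + (U (0, 2)) ^ 3 / (U (0, 1)) ^ 2 - f t) t x U
      = U (1,1) - 3 * (U (0,3))^2 / U (0,1) - 3 * U (0,2) * U (0,4) / U (0,1)
          + 6 * (U (0,2))^2 * U (0,3) / (U (0,1))^2
          - 2 * (U (0,2))^4 / (U (0,1))^3 := by
  unfold DX
  rw [tsum_eq_sum (s := ({(1,0),(0,2),(0,3),(0,1)} : Finset (ℕ×ℕ))) ?side]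
  case side =>
    intro p hp
    simp only [Finset.mem_insert, Finset.mem_singleton] at hp
    push_neg at hp
    obtain ⟨n1, n2, n3, n4⟩ := hp
    rw [pj2_zero_of _ p t x U (fun s => by
      simp only [Function.update_of_ne (Ne.symm n1), Function.update_of_ne (Ne.symm n2),
        Function.update_of_ne (Ne.symm n3), Function.update_of_ne (Ne.symm n4)]), mul_zero]
  rw [Finset.sum_insert (by decide), Finset.sum_insert (by decide),
      Finset.sum_insert (by decide), Finset.sum_singleton]
  rw [pj2_eval _ (1,0) t x U
      (fun s => (-(3) * U (0,2) * U (0,3) / U (0,1) + (U (0,2))^3 / (U (0,1))^2 - f t)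
          + 1 * s + 0*s^2 + 0*s^3)
      (Filter.Eventually.of_forall fun s => by simp [Function.update_apply]; ring)]
  rw [pj2_eval _ (0,2) t x U
      (fun s => (U (1,0) - f t) + (-(3) * U (0,3) / U (0,1)) * s + 0*s^2
          + (1 / (U (0,1))^2) * s^3)
      (Filter.Eventually.of_forall fun s => by simp [Function.update_apply]; ring)]
  rw [pj2_eval _ (0,3) t x U
      (fun s => (U (1,0) + (U (0,2))^3 / (U (0,1))^2 - f t)
          + (-(3) * U (0,2) / U (0,1)) * s + 0*s^2 + 0*s^3)
      (Filter.Eventually.of_forall fun s => by simp [Function.update_apply]; ring)]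
  rw [pj2_eval _ (0,1) t x U
      (fun s => (U (1,0) - f t) + 0 * s + 0*s^2 + 0*s^3
          + (-(3) * U (0,2) * U (0,3))/s + ((U (0,2))^3)/s^2)
      (Filter.Eventually.of_forall fun s => by simp [Function.update_apply]; ring)]
  rw [deriv_poly3, deriv_poly3, deriv_poly3, deriv_rat _ _ _ _ _ _ _ h1]
  rw [show deriv (fun s : ℝ => U (1,0) - 3 * U (0,2) * U (0,3) / U (0,1)
      + (U (0,2))^3 / (U (0,1))^2 - f t) x = 0 from deriv_const _ _]
  field_simp
  ring

end stages

/-- for Δ = u_t − 3u_xx·u_xxx/u_x + u_xx³/u_x² − f(t) and the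
    quasi-Lagrangian L = −(1/2)·u_x·Δ, the identity E_u(L) = D_x(Δ) holds in jet
    coordinates wherever u_x ≠ 0. -/
theorem stmt_14 (f : ℝ → ℝ) (hf : ContDiff ℝ (⊤ : ℕ∞) f)
    (Δ L : ℝ → ℝ → (ℕ × ℕ → ℝ) → ℝ)
    (hΔ : Δ = fun t _x U =>
      U (1, 0) - 3 * U (0, 2) * U (0, 3) / U (0, 1)
        + (U (0, 2)) ^ 3 / (U (0, 1)) ^ 2 - f t)
    (hL : L = fun t x U => -(1 / 2) * U (0, 1) * Δ t x U) :
    ∀ (t x : ℝ) (U : ℕ × ℕ → ℝ), U (0, 1) ≠ 0 →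
      EulerU L t x U = DX Δ t x U := by
  have hL' : L = fun t _x U => -(1/2) * U (0,1) *
      (U (1,0) - 3 * U (0,2) * U (0,3) / U (0,1) + (U (0,2))^3 / (U (0,1))^2 - f t) := by
    rw [hL, hΔ]
  intro t x U h1
  have hc10 : ∀ t' x' U', U' (0,1) ≠ 0 →
      pj2 L (1,0) t' x' U' = -(1/2) * U' (0,1) := fun t' x' U' _ => by
    rw [hL']; exact P10 f t' x' U'
  have hc01 : ∀ t' x' U', U' (0,1) ≠ 0 →
      pj2 L (0,1) t' x' U'
        = -(1/2) * U' (1,0) + 1/2 * f t' + 1/2 * (U' (0,2))^3 / (U' (0,1))^2 :=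
    fun t' x' U' h' => by rw [hL']; exact P01 f t' x' U' h'
  have hc02 : ∀ t' x' U', U' (0,1) ≠ 0 →
      pj2 L (0,2) t' x' U' = 3/2 * U' (0,3) - 3/2 * (U' (0,2))^2 / U' (0,1) :=
    fun t' x' U' h' => by rw [hL']; exact P02 f t' x' U' h'
  have hc03 : ∀ t' x' U', U' (0,1) ≠ 0 →
      pj2 L (0,3) t' x' U' = 3/2 * U' (0,2) :=
    fun t' x' U' h' => by rw [hL']; exact P03 f t' x' U' h'
  have h10val : DT (pj2 L (1,0)) t x U = -(1/2) * U (1,1) := by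
    rw [DT_congr hc10 t x U h1]; exact DT_G10 t x U
  have h01val : DX (pj2 L (0,1)) t x U
      = -(1/2) * U (1,1) + 3/2 * (U (0,2))^2 * U (0,3) / (U (0,1))^2
          - (U (0,2))^4 / (U (0,1))^3 := by
    rw [DX_congr hc01 t x U h1]; exact DX_G01 f t x U h1
  have h02mid : ∀ t' x' U', U' (0,1) ≠ 0 →
      DX (pj2 L (0,2)) t' x' U'
        = 3/2 * U' (0,4) - 3 * U' (0,2) * U' (0,3) / U' (0,1)
            + 3/2 * (U' (0,2))^3 / (U' (0,1))^2 :=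
    fun t' x' U' h' => by rw [DX_congr hc02 t' x' U' h']; exact DX_G02 t' x' U' h'
  have h02val : DX (DX (pj2 L (0,2))) t x U
      = 3/2 * U (0,5) - 3 * (U (0,3))^2 / U (0,1) - 3 * U (0,2) * U (0,4) / U (0,1)
          + 15/2 * (U (0,2))^2 * U (0,3) / (U (0,1))^2
          - 3 * (U (0,2))^4 / (U (0,1))^3 := by
    rw [DX_congr h02mid t x U h1]; exact DX_H02 t x U h1
  have h03a : ∀ t' x' U', U' (0,1) ≠ 0 →
      DX (pj2 L (0,3)) t' x' U' = 3/2 * U' (0,3) :=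
    fun t' x' U' h' => by rw [DX_congr hc03 t' x' U' h']; exact DX_single (3/2) 2 t' x' U'
  have h03b : ∀ t' x' U', U' (0,1) ≠ 0 →
      DX (DX (pj2 L (0,3))) t' x' U' = 3/2 * U' (0,4) :=
    fun t' x' U' h' => by rw [DX_congr h03a t' x' U' h']; exact DX_single (3/2) 3 t' x' U'
  have h03val : DX (DX (DX (pj2 L (0,3)))) t x U = 3/2 * U (0,5) := by
    rw [DX_congr h03b t x U h1]; exact DX_single (3/2) 4 t x U
  have side : ∀ p ∉ ({(1,0),(0,1),(0,2),(0,3)} : Finset (ℕ×ℕ)),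
      (-1:ℝ)^(p.1+p.2) * (DT^[p.1] (DX^[p.2] (pj2 L p))) t x U = 0 := by
    intro p hp
    simp only [Finset.mem_insert, Finset.mem_singleton] at hp
    push_neg at hp
    obtain ⟨m1, m2, m3, m4⟩ := hp
    have hz : pj2 L p = fun _ _ _ => (0:ℝ) := by
      funext t' x' U'
      rw [hL']
      exact pj2_zero_of _ p t' x' U' (fun s => by
        simp only [Function.update_of_ne (Ne.symm m1), Function.update_of_ne (Ne.symm m2),
          Function.update_of_ne (Ne.symm m3), Function.update_of_ne (Ne.symm m4)])
    rw [hz, DX_iter_zero, DT_iter_zero]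
    simp
  have e0 : EulerU L t x U
      = (-1:ℝ)^1 * DT (pj2 L (1,0)) t x U
      + ((-1:ℝ)^1 * DX (pj2 L (0,1)) t x U
      + ((-1:ℝ)^2 * DX (DX (pj2 L (0,2))) t x U
      + (-1:ℝ)^3 * DX (DX (DX (pj2 L (0,3)))) t x U)) := by
    unfold EulerU
    rw [tsum_eq_sum (s := ({(1,0),(0,1),(0,2),(0,3)} : Finset (ℕ×ℕ))) side]
    rw [Finset.sum_insert (by decide), Finset.sum_insert (by decide),
        Finset.sum_insert (by decide), Finset.sum_singleton]
    rfl
  rw [e0, h10val, h01val, h02val, h03val, hΔ, DX_Delta f t x U h1]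
  norm_num
  field_simp
  ring
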